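/- Let V be any 4×4 real symmetric matrix written in 2×2 blocks V = [[A, C],[Cᵀ, B]]. Then the characteristic polynomial of the 4×4 matrix Ω (Λ V Λ) equals x⁴ + (det A + det B − 2 det C)·x² + det V. -/

import Mathlib

open Matrix Polynomial

noncomputable section

/-- The 2×2 symplectic form `J = [[0,1],[-1,0]]`. -/
def J2 : Matrix (Fin 2) (Fin 2) ℝ := !![0, 1; -1, 0]

/-- `Z = diag(1,-1)`. -/
def Z2 : Matrix (Fin 2) (Fin 2) ℝ := !![1, 0; 0, -1]

/-- The 4×4 symplectic form `Ω = diag(J, J)`. -/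
def Ω4 : Matrix (Fin 2 ⊕ Fin 2) (Fin 2 ⊕ Fin 2) ℝ := fromBlocks J2 0 0 J2

/-- The partial transposition matrix `Λ = diag(1,-1,1,1)`. -/
def Λ4 : Matrix (Fin 2 ⊕ Fin 2) (Fin 2 ⊕ Fin 2) ℝ := fromBlocks Z2 0 0 1

/-! Written in 2×2 blocks, `Ω (Λ V Λ) = [[J Z A Z, J Z C], [J Cᵀ Z, J B]]`, so its characteristic
polynomial is an explicit 4×4 determinant in the entries of `A`, `B`, `C`; the odd powers of `x`
cancel once `A` and `B` are symmetric. -/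

theorem Matrix.det_fin_four {R : Type*} [CommRing R] (A : Matrix (Fin 4) (Fin 4) R) :
    A.det =
      A 0 0 * (A 1 1 * A 2 2 * A 3 3 - A 1 1 * A 2 3 * A 3 2 - A 1 2 * A 2 1 * A 3 3
        + A 1 2 * A 2 3 * A 3 1 + A 1 3 * A 2 1 * A 3 2 - A 1 3 * A 2 2 * A 3 1)
      - A 0 1 * (A 1 0 * A 2 2 * A 3 3 - A 1 0 * A 2 3 * A 3 2 - A 1 2 * A 2 0 * A 3 3
        + A 1 2 * A 2 3 * A 3 0 + A 1 3 * A 2 0 * A 3 2 - A 1 3 * A 2 2 * A 3 0)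
      + A 0 2 * (A 1 0 * A 2 1 * A 3 3 - A 1 0 * A 2 3 * A 3 1 - A 1 1 * A 2 0 * A 3 3
        + A 1 1 * A 2 3 * A 3 0 + A 1 3 * A 2 0 * A 3 1 - A 1 3 * A 2 1 * A 3 0)
      - A 0 3 * (A 1 0 * A 2 1 * A 3 2 - A 1 0 * A 2 2 * A 3 1 - A 1 1 * A 2 0 * A 3 2
        + A 1 1 * A 2 2 * A 3 0 + A 1 2 * A 2 0 * A 3 1 - A 1 2 * A 2 1 * A 3 0) := by
  rw [det_succ_row_zero]
  simp [Fin.sum_univ_succ, det_fin_three, submatrix_apply, Fin.succAbove]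
  ring

theorem Matrix.det_fromBlocks_fin_two {R : Type*} [CommRing R]
    (P Q S T : Matrix (Fin 2) (Fin 2) R) :
    (fromBlocks P Q S T).det =
      !![P 0 0, P 0 1, Q 0 0, Q 0 1;
         P 1 0, P 1 1, Q 1 0, Q 1 1;
         S 0 0, S 0 1, T 0 0, T 0 1;
         S 1 0, S 1 1, T 1 0, T 1 1].det := by
  rw [← det_reindex_self finSumFinEquiv]
  congr 1
  ext i j
  fin_cases i <;> fin_cases j <;> rfl

theorem omega4_mul_partialTranspose (P Q S T : Matrix (Fin 2) (Fin 2) ℝ) :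
    Ω4 * (Λ4 * fromBlocks P Q S T * Λ4) =
      fromBlocks (J2 * Z2 * P * Z2) (J2 * Z2 * Q) (J2 * S * Z2) (J2 * T) := by
  simp [Ω4, Λ4, fromBlocks_multiply, Matrix.mul_assoc]

theorem charpoly_omega_PT (A B Cm : Matrix (Fin 2) (Fin 2) ℝ)
    (hA : Aᵀ = A) (hB : Bᵀ = B) :
    (Ω4 * (Λ4 * fromBlocks A Cm Cmᵀ B * Λ4)).charpoly =
      X ^ 4 + Polynomial.C (A.det + B.det - 2 * Cm.det) * X ^ 2 +
        Polynomial.C (fromBlocks A Cm Cmᵀ B).det := by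
  rw [omega4_mul_partialTranspose, charpoly, charmatrix_fromBlocks, det_fromBlocks_fin_two,
    det_fromBlocks_fin_two, det_fin_four, det_fin_four]
  simp [J2, Z2, det_fin_two, mul_apply, vecMul, dotProduct, Fin.sum_univ_two, map_ofNat,
    IsSymm.apply hA 0 1, IsSymm.apply hB 0 1]
  ring
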